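/- Let σ be a complex 2×2 involution with σ² = I, let |Ψ⟩ ∈ ℂ² be a unit vector, and let α ∈ ℝ. Define S(v) = |0⟩ ⊗ v + |1⟩ ⊗ σv. Then the projection of (exp(iα σ_x) ⊗ I)(S|Ψ⟩) onto |0⟩ in the first factor equals exp(iα σ)|Ψ⟩, and the projection onto |1⟩ in the first factor equals σ · exp(iα σ)|Ψ⟩; moreover applying iσ to the latter yields i·exp(iα σ)|Ψ⟩, proportional to the target state. -/

import Mathlib

open Matrix Kronecker Complex

/-!
`S` intertwines `σ` with `σ_x ⊗ I`: `(σ_x ⊗ I) S v = S (σ v)` because `σ² = I`. Both are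
involutions, so `exp (t A) = cosh t · I + sinh t · A` for either of them, and `S` intertwines the
exponentials as well: `(exp(iασ_x) ⊗ I) S Ψ = S (exp(iασ) Ψ)`. The two blocks of `S u` are `u`
and `σ u`.
-/

theorem NormedSpace.exp_smul_of_mul_self_eq_one {𝔸 : Type*} [Ring 𝔸] [Algebra ℂ 𝔸]
    [TopologicalSpace 𝔸] [IsTopologicalRing 𝔸] [ContinuousSMul ℂ 𝔸] [T2Space 𝔸]
    {a : 𝔸} (ha : a * a = 1) (t : ℂ) :
    NormedSpace.exp (t • a) = cosh t • (1 : 𝔸) + sinh t • a := by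
  have ha_even (n : ℕ) : a ^ (2 * n) = 1 := by rw [pow_mul, sq, ha, one_pow]
  rw [NormedSpace.exp_eq_tsum ℂ]
  refine HasSum.tsum_eq (HasSum.even_add_odd ?_ ?_)
  · convert (hasSum_cosh t).smul_const (1 : 𝔸) using 2 with n
    rw [smul_pow, ha_even, smul_smul, div_eq_inv_mul]
  · convert (hasSum_sinh t).smul_const a using 2 with n
    rw [smul_pow, pow_succ a, ha_even, one_mul, smul_smul, div_eq_inv_mul]

theorem pauliX_mul_self {R : Type*} [Semiring R] :
    (!![0, 1; 1, 0] : Matrix (Fin 2) (Fin 2) R) * !![0, 1; 1, 0] = 1 := by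
  rw [Matrix.one_fin_two]; simp

section ControlledEncoding

variable {R n : Type*} [CommSemiring R] [Fintype n]

/-- `S v = |0⟩ ⊗ v + |1⟩ ⊗ σ v`, indexing `ℂ² ⊗ ℂⁿ` by `Fin 2 × n`. -/
def ctrlEncode (σ : Matrix n n R) (v : n → R) : Fin 2 × n → R :=
  fun p => ![v, σ *ᵥ v] p.1 p.2

@[simp] theorem ctrlEncode_zero (σ : Matrix n n R) (v : n → R) (j : n) :
    ctrlEncode σ v (0, j) = v j := rfl

@[simp] theorem ctrlEncode_one (σ : Matrix n n R) (v : n → R) (j : n) :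
    ctrlEncode σ v (1, j) = (σ *ᵥ v) j := rfl

theorem kronecker_one_mulVec_apply [DecidableEq n] (A : Matrix (Fin 2) (Fin 2) R)
    (w : Fin 2 × n → R) (i : Fin 2) (j : n) :
    ((A ⊗ₖ (1 : Matrix n n R)) *ᵥ w) (i, j) = ∑ k, A i k * w (k, j) := by
  simp [mulVec, dotProduct, Fintype.sum_prod_type, one_apply]

theorem pauliX_kronecker_one_mulVec_ctrlEncode [DecidableEq n] {σ : Matrix n n R}
    (hσ : σ * σ = 1) (v : n → R) :
    (!![0, 1; 1, 0] ⊗ₖ (1 : Matrix n n R)) *ᵥ ctrlEncode σ v = ctrlEncode σ (σ *ᵥ v) := by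
  ext ⟨i, j⟩
  fin_cases i <;> simp [kronecker_one_mulVec_apply, mulVec_mulVec, hσ]

end ControlledEncoding

theorem exp_kronecker_one_mulVec_ctrlEncode {n : Type*} [Fintype n] [DecidableEq n]
    {σ : Matrix n n ℂ} (hσ : σ * σ = 1) (t : ℂ) (v : n → ℂ) :
    (NormedSpace.exp (t • !![0, 1; 1, 0]) ⊗ₖ (1 : Matrix n n ℂ)) *ᵥ ctrlEncode σ v =
      ctrlEncode σ (NormedSpace.exp (t • σ) *ᵥ v) := by
  rw [NormedSpace.exp_smul_of_mul_self_eq_one pauliX_mul_self,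
    NormedSpace.exp_smul_of_mul_self_eq_one hσ, add_kronecker, smul_kronecker, smul_kronecker,
    one_kronecker_one, add_mulVec, smul_mulVec, smul_mulVec, one_mulVec,
    pauliX_kronecker_one_mulVec_ctrlEncode hσ, add_mulVec, smul_mulVec, smul_mulVec,
    one_mulVec]
  ext ⟨i, j⟩
  fin_cases i <;> simp [mulVec_add, mulVec_smul]

theorem crio_final_step_general (σ : Matrix (Fin 2) (Fin 2) ℂ) (hσ : σ * σ = 1)
    (Ψ : Fin 2 → ℂ) (α : ℝ)
    (S : (Fin 2 → ℂ) → (Fin 2 × Fin 2 → ℂ))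
    (hS : ∀ v : Fin 2 → ℂ, S v = fun p =>
      (![(1 : ℂ), 0] p.1) * v p.2 + (![(0 : ℂ), 1] p.1) * σ.mulVec v p.2)
    (σx : Matrix (Fin 2) (Fin 2) ℂ) (hx : σx = !![0, 1; 1, 0])
    (W : Fin 2 × Fin 2 → ℂ)
    (hW : W = ((NormedSpace.exp ((Complex.I * (α : ℂ)) • σx)) ⊗ₖ
      (1 : Matrix (Fin 2) (Fin 2) ℂ)).mulVec (S Ψ)) :
    (fun j => W (0, j)) = (NormedSpace.exp ((Complex.I * (α : ℂ)) • σ)).mulVec Ψ ∧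
    (fun j => W (1, j)) =
      σ.mulVec ((NormedSpace.exp ((Complex.I * (α : ℂ)) • σ)).mulVec Ψ) ∧
    Complex.I • σ.mulVec (fun j => W (1, j)) =
      Complex.I • (NormedSpace.exp ((Complex.I * (α : ℂ)) • σ)).mulVec Ψ := by
  have hSΨ : S Ψ = ctrlEncode σ Ψ := by
    rw [hS]
    ext ⟨i, j⟩
    fin_cases i <;> simp [ctrlEncode]
  obtain rfl : W = ctrlEncode σ (NormedSpace.exp ((I * α) • σ) *ᵥ Ψ) := by
    rw [hW, hx, hSΨ, exp_kronecker_one_mulVec_ctrlEncode hσ]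
  refine ⟨rfl, rfl, ?_⟩
  simp only [ctrlEncode_one, mulVec_mulVec, ← Matrix.mul_assoc, hσ, one_mul]

theorem crio_final_step (σ : Matrix (Fin 2) (Fin 2) ℂ) (hσ : σ * σ = 1)
    (Ψ : Fin 2 → ℂ) (hΨ : ∑ i, ‖Ψ i‖ ^ 2 = 1) (α : ℝ)
    (S : (Fin 2 → ℂ) → (Fin 2 × Fin 2 → ℂ))
    (hS : ∀ v : Fin 2 → ℂ, S v = fun p =>
      (![(1 : ℂ), 0] p.1) * v p.2 + (![(0 : ℂ), 1] p.1) * σ.mulVec v p.2)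
    (σx : Matrix (Fin 2) (Fin 2) ℂ) (hx : σx = !![0, 1; 1, 0])
    (W : Fin 2 × Fin 2 → ℂ)
    (hW : W = ((NormedSpace.exp ((Complex.I * (α : ℂ)) • σx)) ⊗ₖ
      (1 : Matrix (Fin 2) (Fin 2) ℂ)).mulVec (S Ψ)) :
    (fun j => W (0, j)) = (NormedSpace.exp ((Complex.I * (α : ℂ)) • σ)).mulVec Ψ ∧
    (fun j => W (1, j)) =
      σ.mulVec ((NormedSpace.exp ((Complex.I * (α : ℂ)) • σ)).mulVec Ψ) ∧
    Complex.I • σ.mulVec (fun j => W (1, j)) =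
      Complex.I • (NormedSpace.exp ((Complex.I * (α : ℂ)) • σ)).mulVec Ψ :=
  crio_final_step_general σ hσ Ψ α S hS σx hx W hW
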